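/- arXiv:2005.04459 — 2 statements merged into one kernel-verified Lean document; each statement's English description precedes it below -/
import Mathlib

section
/- Let α ∈ (1/2,1) and β₁ > 1-α. Suppose b: [0,T] × ℝ → ℝ satisfies |b(t,x) - b(s,x)| ≤ L|t-s|^{β₁} and |b(t,x) - b(t,y)| ≤ L|x-y|, and X: [0,T] → ℝ is a path satisfying |X_t - X_s| ≤ M|t-s|^{1/2-δ} for some δ < α - 1/2 and M ≥ 0. Then for every s ∈ [0,T], the integral φ(s) = -∫₀ˢ (α-1)(s-u)^{α-2} [b(s,X_s) - b(u,X_u)] du converges absolutely, with |φ(s)| ≤ L(1-α)[s^{α+β₁-1}/(α+β₁-1) + M s^{α-1/2-δ}/(α-1/2-δ)]. -/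
open MeasureTheory intervalIntegral

/-- Absolute convergence and bound for
`φ(s) = -∫₀ˢ (α-1)(s-u)^{α-2}[b(s,X_s) - b(u,X_u)] du`, where `b` is `β₁`-Hölder in
time, Lipschitz in space, and the path `X` is `(1/2-δ)`-Hölder. -/
theorem stmt4 (T L α β₁ δ M : ℝ) (b : ℝ → ℝ → ℝ) (X : ℝ → ℝ)
    (hT : 0 < T) (hL : 0 < L) (hα : α ∈ Set.Ioo (1/2 : ℝ) 1) (hβ : 1 - α < β₁)
    (hδ : δ ∈ Set.Ioo (0:ℝ) (α - 1/2)) (hM : 0 ≤ M)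
    (hb1 : ∀ t s x, t ∈ Set.Icc (0:ℝ) T → s ∈ Set.Icc (0:ℝ) T →
      |b t x - b s x| ≤ L * |t - s| ^ β₁)
    (hb2 : ∀ t x y, t ∈ Set.Icc (0:ℝ) T → |b t x - b t y| ≤ L * |x - y|)
    (hX : ∀ t s, t ∈ Set.Icc (0:ℝ) T → s ∈ Set.Icc (0:ℝ) T →
      |X t - X s| ≤ M * |t - s| ^ (1/2 - δ)) :
    ∀ s ∈ Set.Icc (0:ℝ) T,
      IntervalIntegrable
        (fun u => |(α - 1) * (s - u) ^ (α - 2) * (b s (X s) - b u (X u))|)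
        volume 0 s ∧
      IntervalIntegrable
        (fun u => (α - 1) * (s - u) ^ (α - 2) * (b s (X s) - b u (X u)))
        volume 0 s ∧
      |∫ u in (0:ℝ)..s, -((α - 1) * (s - u) ^ (α - 2) * (b s (X s) - b u (X u)))|
        ≤ L * (1 - α) * (s ^ (α + β₁ - 1) / (α + β₁ - 1)
            + M * s ^ (α - 1/2 - δ) / (α - 1/2 - δ)) := by
  obtain ⟨hα1, hα2⟩ := hα
  obtain ⟨hδ1, hδ2⟩ := hδ
  intro s hs
  obtain ⟨hs0, hsT⟩ := hs
  have hβ1pos : 0 < β₁ := by linarith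
  have hc2 : (0:ℝ) < 1/2 - δ := by linarith
  set p₁ := α + β₁ - 2 with hp₁
  set p₂ := α - 3/2 - δ with hp₂
  have hp₁' : -1 < p₁ := by simp only [hp₁]; linarith
  have hp₂' : -1 < p₂ := by simp only [hp₂]; linarith
  set f : ℝ → ℝ := fun u => (α - 1) * (s - u) ^ (α - 2) * (b s (X s) - b u (X u)) with hf
  set G : ℝ → ℝ := fun u => L * (1 - α) * ((s - u) ^ p₁ + M * (s - u) ^ p₂) with hG
  have hsub : Set.Icc 0 s ⊆ Set.Icc (0:ℝ) T := Set.Icc_subset_Icc le_rfl hsT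
  -- pointwise bound on Icc 0 s
  have hBnd : ∀ u ∈ Set.Icc (0:ℝ) s, |f u| ≤ G u := by
    intro u hu
    obtain ⟨hu0, hus⟩ := hu
    rcases eq_or_lt_of_le hus with heq | hlt
    · have h0 : s - u = 0 := by rw [heq]; ring
      have hα2ne : α - 2 ≠ 0 := by linarith
      have hGnn : 0 ≤ G u := by
        have : 0 ≤ (s - u) ^ p₁ + M * (s - u) ^ p₂ := by positivity
        have hL1 : (0:ℝ) ≤ L * (1 - α) := by nlinarith
        exact mul_nonneg hL1 this
      simp only [hf, h0, Real.zero_rpow hα2ne, mul_zero, zero_mul, abs_zero]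
      exact hGnn
    · have hsu : 0 < s - u := by linarith
      have huIcc : u ∈ Set.Icc (0:ℝ) T := hsub ⟨hu0, hus⟩
      have hsIcc : s ∈ Set.Icc (0:ℝ) T := ⟨hs0, hsT⟩
      have habs : |s - u| = s - u := abs_of_pos hsu
      have hB : |b s (X s) - b u (X u)|
          ≤ L * (s - u) ^ β₁ + L * (M * (s - u) ^ (1/2 - δ)) := by
        calc |b s (X s) - b u (X u)|
            ≤ |b s (X s) - b u (X s)| + |b u (X s) - b u (X u)| := abs_sub_le _ _ _
          _ ≤ L * |s - u| ^ β₁ + L * |X s - X u| := by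
              gcongr
              · exact hb1 s u (X s) hsIcc huIcc
              · exact hb2 u (X s) (X u) huIcc
          _ ≤ L * (s - u) ^ β₁ + L * (M * (s - u) ^ (1/2 - δ)) := by
              rw [habs]
              gcongr
              have := hX s u hsIcc huIcc
              rwa [habs] at this
      have hA : (0:ℝ) ≤ (s - u) ^ (α - 2) := Real.rpow_nonneg hsu.le _
      have : |f u| = (1 - α) * (s - u) ^ (α - 2) * |b s (X s) - b u (X u)| := by
        simp only [hf, abs_mul, abs_of_nonneg hA, abs_of_neg (show α - 1 < 0 by linarith)]
        ring_nf
      rw [this]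
      have h1α : (0:ℝ) ≤ 1 - α := by linarith
      calc (1 - α) * (s - u) ^ (α - 2) * |b s (X s) - b u (X u)|
          ≤ (1 - α) * (s - u) ^ (α - 2) *
            (L * (s - u) ^ β₁ + L * (M * (s - u) ^ (1/2 - δ))) := by
            apply mul_le_mul_of_nonneg_left hB (by positivity)
        _ = G u := by
            simp only [hG, hp₁, hp₂]
            rw [show α + β₁ - 2 = (α - 2) + β₁ by ring,
              show α - 3/2 - δ = (α - 2) + (1/2 - δ) by ring,
              Real.rpow_add hsu, Real.rpow_add hsu]
            ring
  -- continuity of u ↦ b u (X u) on [0,T]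
  have hgcont : ContinuousOn (fun u => b u (X u)) (Set.Icc (0:ℝ) T) := by
    intro v hv
    rw [ContinuousWithinAt, tendsto_iff_dist_tendsto_zero]
    have key : ∀ c : ℝ, 0 < c →
        Filter.Tendsto (fun u => |u - v| ^ c) (nhdsWithin v (Set.Icc (0:ℝ) T)) (nhds 0) := by
      intro c hc
      have h1 : Filter.Tendsto (fun u : ℝ => |u - v|)
          (nhdsWithin v (Set.Icc (0:ℝ) T)) (nhds 0) := by
        have := ((continuous_id.sub (continuous_const (y := v))).abs).tendsto v
        simp only [Pi.sub_apply, id_eq, sub_self, abs_zero] at this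
        exact this.mono_left nhdsWithin_le_nhds
      have h2 := (Real.continuousAt_rpow_const 0 c (Or.inr hc.le)).tendsto
      rw [Real.zero_rpow hc.ne'] at h2
      exact h2.comp h1
    have h3 : Filter.Tendsto (fun u => L * |u - v| ^ β₁ + L * (M * |u - v| ^ (1/2 - δ)))
        (nhdsWithin v (Set.Icc (0:ℝ) T)) (nhds 0) := by
      have h4 : Filter.Tendsto (fun u => L * |u - v| ^ β₁ + L * (M * |u - v| ^ (1/2 - δ)))
          (nhdsWithin v (Set.Icc (0:ℝ) T)) (nhds (L * 0 + L * (M * 0))) :=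
        ((key β₁ hβ1pos).const_mul L).add (((key _ hc2).const_mul M).const_mul L)
      rw [show L * 0 + L * (M * 0) = 0 by ring] at h4
      exact h4
    apply squeeze_zero' (Filter.Eventually.of_forall fun u => dist_nonneg) ?_ h3
    · filter_upwards [self_mem_nhdsWithin] with u hu
      rw [Real.dist_eq]
      have habs : |u - v| = |v - u| := abs_sub_comm u v
      calc |b u (X u) - b v (X v)|
          ≤ |b u (X u) - b v (X u)| + |b v (X u) - b v (X v)| := abs_sub_le _ _ _
        _ ≤ L * |u - v| ^ β₁ + L * (M * |u - v| ^ (1/2 - δ)) := by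
            gcongr
            · exact hb1 u v (X u) hu hv
            · calc |b v (X u) - b v (X v)| ≤ L * |X u - X v| := hb2 v (X u) (X v) hv
                _ ≤ L * (M * |u - v| ^ (1/2 - δ)) := by
                    gcongr; exact hX u v hu hv
  -- continuity of f on Ioo 0 s
  have hIoosub : Set.Ioo 0 s ⊆ Set.Icc (0:ℝ) T :=
    fun u hu => ⟨hu.1.le, hu.2.le.trans hsT⟩
  have hfcont : ContinuousOn f (Set.Ioo 0 s) := by
    apply ContinuousOn.mul
    · apply ContinuousOn.mul continuousOn_const
      intro u hu
      have hsu : 0 < s - u := by linarith [hu.2]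
      exact ((Real.continuousAt_rpow_const (s - u) (α - 2) (Or.inl hsu.ne')).comp
        ((continuous_const.sub continuous_id).continuousAt)).continuousWithinAt
    · exact continuousOn_const.sub (hgcont.mono hIoosub)
  -- integrability of G
  have hint : ∀ p : ℝ, -1 < p → IntervalIntegrable (fun u => (s - u) ^ p) volume 0 s := by
    intro p hp
    have := ((intervalIntegrable_rpow' hp (a := 0) (b := s)).comp_sub_left s).symm
    simpa using this
  have hGint : IntervalIntegrable G volume 0 s := by
    apply IntervalIntegrable.const_mul
    exact (hint p₁ hp₁').add ((hint p₂ hp₂').const_mul M)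
  -- measurability of f
  have hmeas : AEStronglyMeasurable f (volume.restrict (Set.uIoc 0 s)) := by
    rw [Set.uIoc_of_le hs0,
      ← MeasureTheory.Measure.restrict_congr_set MeasureTheory.Ioo_ae_eq_Ioc]
    exact hfcont.aestronglyMeasurable measurableSet_Ioo
  -- integrability of f
  have hfint : IntervalIntegrable f volume 0 s := by
    apply hGint.mono_fun hmeas
    rw [Set.uIoc_of_le hs0]
    refine Filter.eventually_of_mem (self_mem_ae_restrict measurableSet_Ioc) fun u hu => ?_
    have h1 := hBnd u (Set.Ioc_subset_Icc_self hu)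
    simp only [Real.norm_eq_abs]
    exact h1.trans (le_abs_self _)
  refine ⟨hfint.abs, hfint, ?_⟩
  -- integral computation for G
  have hI : ∀ p : ℝ, -1 < p → ∫ u in (0:ℝ)..s, (s - u) ^ p = s ^ (p + 1) / (p + 1) := by
    intro p hp
    have hp1 : (0:ℝ) < p + 1 := by linarith
    rw [intervalIntegral.integral_comp_sub_left (fun x => x ^ p) s]
    simp only [sub_zero, sub_self]
    rw [integral_rpow (Or.inl hp), Real.zero_rpow hp1.ne']
    ring
  have hGval : ∫ u in (0:ℝ)..s, G u
      = L * (1 - α) * (s ^ (α + β₁ - 1) / (α + β₁ - 1)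
          + M * s ^ (α - 1/2 - δ) / (α - 1/2 - δ)) := by
    simp only [hG]
    rw [intervalIntegral.integral_const_mul,
      intervalIntegral.integral_add (hint p₁ hp₁') ((hint p₂ hp₂').const_mul M),
      intervalIntegral.integral_const_mul, hI p₁ hp₁', hI p₂ hp₂']
    rw [show p₁ + 1 = α + β₁ - 1 by simp only [hp₁]; ring,
      show p₂ + 1 = α - 1/2 - δ by simp only [hp₂]; ring]
    ring
  calc |∫ u in (0:ℝ)..s, -(f u)|
      = |∫ u in (0:ℝ)..s, f u| := by rw [intervalIntegral.integral_neg, abs_neg]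
    _ ≤ ∫ u in (0:ℝ)..s, |f u| := intervalIntegral.abs_integral_le_integral_abs hs0
    _ ≤ ∫ u in (0:ℝ)..s, G u :=
        intervalIntegral.integral_mono_on hs0 hfint.abs hGint hBnd
    _ = _ := hGval
end

section
/- Suppose two random variables F and G satisfy: for every twice differentiable h with bounded derivatives, |E h(F) - E h(G)| ≤ A‖h'‖_∞ + B‖h''‖_∞, where A, B ≥ 0 and E|F|, E|G| ≤ M. Then the Wasserstein distance satisfies d_W(F,G) ≤ A + (2 + M)√u + B/√u for every u ∈ (0,1/2); in particular, optimizing over u gives d_W(F,G) ≤ A + C√B for a constant C depending only on M (valid when B is small enough that the optimal u lies in (0,1/2)). -/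
open MeasureTheory

noncomputable def psi (y : ℝ) : ℝ := (15/512) * max (4 - y^2) 0 ^ 2
noncomputable def psi' (y : ℝ) : ℝ := (15/512) * (2 * max (4 - y^2) 0 * (-(2*y)))

lemma maxsq_hasDeriv (t : ℝ) : HasDerivAt (fun t : ℝ => max t 0 ^ 2) (2 * max t 0) t := by
  rcases lt_trichotomy t 0 with h | h | h
  · have hev : (fun t : ℝ => max t 0 ^ 2) =ᶠ[nhds t] fun _ => (0:ℝ) := by
      filter_upwards [Iio_mem_nhds h] with y hy
      have : y ≤ 0 := le_of_lt hy
      simp [max_eq_right this]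
    have h2 := (hasDerivAt_const t (0:ℝ)).congr_of_eventuallyEq hev
    simpa [max_eq_right h.le] using h2
  · subst h
    rw [hasDerivAt_iff_isLittleO]
    simp only [max_self, sub_zero, smul_zero]
    have hO : (fun x : ℝ => max x 0 ^ 2) =O[nhds 0] fun x => x ^ 2 := by
      apply Asymptotics.isBigO_of_le
      intro x
      have h1 : |max x 0| ≤ |x| := by
        rcases le_or_gt x 0 with hx | hx
        · simp [max_eq_right hx]
        · simp [max_eq_left hx.le]
      simpa [Real.norm_eq_abs, abs_pow] using pow_le_pow_left₀ (abs_nonneg _) h1 2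
    have ho : (fun x : ℝ => x ^ 2) =o[nhds 0] fun x : ℝ => x :=
      Asymptotics.isLittleO_pow_id (by norm_num)
    simpa using hO.trans_isLittleO ho
  · have hev : (fun t : ℝ => max t 0 ^ 2) =ᶠ[nhds t] fun y => y ^ 2 := by
      filter_upwards [Ioi_mem_nhds h] with y hy
      have : (0:ℝ) ≤ y := le_of_lt hy
      simp [max_eq_left this]
    have h2 := (hasDerivAt_pow 2 t).congr_of_eventuallyEq hev
    simpa [max_eq_left h.le, two_mul, mul_comm] using h2

lemma psi_hasDeriv (y : ℝ) : HasDerivAt psi (psi' y) y := by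
  have h1 : HasDerivAt (fun y : ℝ => 4 - y^2) (-(2*y)) y := by
    simpa using (hasDerivAt_pow 2 y).const_sub 4
  have := ((maxsq_hasDeriv (4 - y^2)).comp y h1).const_mul (15/512 : ℝ)
  exact this.congr_deriv (by unfold psi'; ring)

lemma psi_nonneg (y : ℝ) : 0 ≤ psi y := by
  unfold psi; positivity

lemma psi_cont : Continuous psi := by
  unfold psi; fun_prop

lemma psi'_cont : Continuous psi' := by
  unfold psi'; fun_prop

lemma psi_zero {y : ℝ} (hy : 2 ≤ |y|) : psi y = 0 := by
  have : 4 - y^2 ≤ 0 := by nlinarith [sq_abs y, abs_nonneg y]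
  simp [psi, max_eq_right this]

lemma psi'_zero {y : ℝ} (hy : 2 ≤ |y|) : psi' y = 0 := by
  have : 4 - y^2 ≤ 0 := by nlinarith [sq_abs y, abs_nonneg y]
  simp [psi', max_eq_right this]

lemma psi_contDiff : ContDiff ℝ 1 psi := by
  rw [contDiff_one_iff_deriv]
  refine ⟨fun y => (psi_hasDeriv y).differentiableAt, ?_⟩
  have : deriv psi = psi' := funext fun y => (psi_hasDeriv y).deriv
  rw [this]; exact psi'_cont

lemma integral_eq_intervalIntegral {f : ℝ → ℝ} (hf : ∀ y : ℝ, 2 ≤ |y| → f y = 0) :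
    ∫ y : ℝ, f y = ∫ y in (-2:ℝ)..2, f y := by
  rw [intervalIntegral.integral_of_le (by norm_num : (-2:ℝ) ≤ 2)]
  refine (setIntegral_eq_integral_of_forall_compl_eq_zero fun x hx => ?_).symm
  apply hf
  simp only [Set.mem_Ioc, not_and_or, not_lt, not_le] at hx
  rcases hx with hx | hx
  · rw [abs_of_nonpos (by linarith)]; linarith
  · rw [abs_of_nonneg (by linarith)]; linarith

lemma psi_integral : ∫ y : ℝ, psi y = 1 := by
  rw [integral_eq_intervalIntegral fun y hy => psi_zero hy]
  have hcongr : Set.EqOn psi (fun y => (15/512) * (16 - 8*y^2 + y^4)) (Set.uIcc (-2:ℝ) 2) := by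
    intro y hy
    rw [Set.uIcc_of_le (by norm_num : (-2:ℝ) ≤ 2)] at hy
    have h4 : (0:ℝ) ≤ 4 - y^2 := by nlinarith [hy.1, hy.2]
    simp only [psi, max_eq_left h4]; ring
  rw [intervalIntegral.integral_congr hcongr]
  have hF : ∀ y : ℝ, HasDerivAt (fun y : ℝ => (15/512) * (16*y - 8*y^3/3 + y^5/5))
      ((15/512) * (16 - 8*y^2 + y^4)) y := by
    intro y
    have h1 : HasDerivAt (fun y : ℝ => 16*y - 8*y^3/3 + y^5/5)
        (16 - 8*y^2 + y^4) y := by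
      have := (((hasDerivAt_id y).const_mul (16:ℝ)).sub
        (((hasDerivAt_pow 3 y).const_mul (8:ℝ)).div_const 3)).add
        ((hasDerivAt_pow 5 y).div_const 5)
      refine this.congr_deriv ?_; push_cast; ring
    exact h1.const_mul _
  rw [intervalIntegral.integral_eq_sub_of_hasDerivAt (fun y _ => hF y)
    ((by fun_prop : Continuous fun y : ℝ => (15/512) * (16 - 8*y^2 + y^4)).intervalIntegrable _ _)]
  norm_num

lemma abs_psi_integral : ∫ y : ℝ, |y| * psi y = 5/8 := by
  rw [integral_eq_intervalIntegral fun y hy => by rw [psi_zero hy, mul_zero]]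
  have hsplit := intervalIntegral.integral_add_adjacent_intervals
    (μ := volume) (a := (-2:ℝ)) (b := 0) (c := 2) (f := fun y => |y| * psi y)
    ((continuous_abs.mul psi_cont).intervalIntegrable _ _)
    ((continuous_abs.mul psi_cont).intervalIntegrable _ _)
  rw [← hsplit]
  have hL : (∫ y in (-2:ℝ)..0, |y| * psi y) = 5/16 := by
    have hcongr : Set.EqOn (fun y => |y| * psi y)
        (fun y => (15/512) * (-(16*y) + 8*y^3 - y^5)) (Set.uIcc (-2:ℝ) 0) := by
      intro y hy
      rw [Set.uIcc_of_le (by norm_num : (-2:ℝ) ≤ 0)] at hy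
      have h4 : (0:ℝ) ≤ 4 - y^2 := by nlinarith [hy.1, hy.2]
      simp only [psi, max_eq_left h4, abs_of_nonpos hy.2]; ring
    rw [intervalIntegral.integral_congr hcongr]
    have hF : ∀ y : ℝ, HasDerivAt (fun y : ℝ => (15/512) * (-(8*y^2) + 2*y^4 - y^6/6))
        ((15/512) * (-(16*y) + 8*y^3 - y^5)) y := by
      intro y
      have := ((((hasDerivAt_pow 2 y).const_mul (8:ℝ)).neg.add
        ((hasDerivAt_pow 4 y).const_mul (2:ℝ))).sub
        ((hasDerivAt_pow 6 y).div_const 6)).const_mul (15/512 : ℝ)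
      refine this.congr_deriv ?_
      push_cast; ring
    rw [intervalIntegral.integral_eq_sub_of_hasDerivAt (fun y _ => hF y)
      ((by fun_prop : Continuous fun y : ℝ => (15/512) * (-(16*y) + 8*y^3 - y^5)).intervalIntegrable _ _)]
    norm_num
  have hR : (∫ y in (0:ℝ)..2, |y| * psi y) = 5/16 := by
    have hcongr : Set.EqOn (fun y => |y| * psi y)
        (fun y => (15/512) * (16*y - 8*y^3 + y^5)) (Set.uIcc (0:ℝ) 2) := by
      intro y hy
      rw [Set.uIcc_of_le (by norm_num : (0:ℝ) ≤ 2)] at hy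
      have h4 : (0:ℝ) ≤ 4 - y^2 := by nlinarith [hy.1, hy.2]
      simp only [psi, max_eq_left h4, abs_of_nonneg hy.1]; ring
    rw [intervalIntegral.integral_congr hcongr]
    have hF : ∀ y : ℝ, HasDerivAt (fun y : ℝ => (15/512) * (8*y^2 - 2*y^4 + y^6/6))
        ((15/512) * (16*y - 8*y^3 + y^5)) y := by
      intro y
      have := ((((hasDerivAt_pow 2 y).const_mul (8:ℝ)).sub
        ((hasDerivAt_pow 4 y).const_mul (2:ℝ))).add
        ((hasDerivAt_pow 6 y).div_const 6)).const_mul (15/512 : ℝ)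
      refine this.congr_deriv ?_
      push_cast; ring
    rw [intervalIntegral.integral_eq_sub_of_hasDerivAt (fun y _ => hF y)
      ((by fun_prop : Continuous fun y : ℝ => (15/512) * (16*y - 8*y^3 + y^5)).intervalIntegrable _ _)]
    norm_num
  rw [hL, hR]; norm_num

lemma abs_psi'_integral : ∫ y : ℝ, |psi' y| = 15/16 := by
  rw [integral_eq_intervalIntegral fun y hy => by rw [psi'_zero hy, abs_zero]]
  have hsplit := intervalIntegral.integral_add_adjacent_intervals
    (μ := volume) (a := (-2:ℝ)) (b := 0) (c := 2) (f := fun y => |psi' y|)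
    ((psi'_cont.abs).intervalIntegrable _ _)
    ((psi'_cont.abs).intervalIntegrable _ _)
  rw [← hsplit]
  have hL : (∫ y in (-2:ℝ)..0, |psi' y|) = 15/32 := by
    have hcongr : Set.EqOn (fun y => |psi' y|)
        (fun y => (15/512) * (-(16*y) + 4*y^3)) (Set.uIcc (-2:ℝ) 0) := by
      intro y hy
      rw [Set.uIcc_of_le (by norm_num : (-2:ℝ) ≤ 0)] at hy
      have h4 : (0:ℝ) ≤ 4 - y^2 := by nlinarith [hy.1, hy.2]
      have hval : psi' y = (15/512) * (-(16*y) + 4*y^3) := by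
        simp only [psi', max_eq_left h4]; ring
      have hnn : 0 ≤ psi' y := by rw [hval]; nlinarith [hy.1, hy.2]
      simp only []; rw [abs_of_nonneg hnn, hval]
    rw [intervalIntegral.integral_congr hcongr]
    have hF : ∀ y : ℝ, HasDerivAt (fun y : ℝ => (15/512) * (-(8*y^2) + y^4))
        ((15/512) * (-(16*y) + 4*y^3)) y := by
      intro y
      have := (((hasDerivAt_pow 2 y).const_mul (8:ℝ)).neg.add
        (hasDerivAt_pow 4 y)).const_mul (15/512 : ℝ)
      refine this.congr_deriv ?_
      push_cast; ring
    rw [intervalIntegral.integral_eq_sub_of_hasDerivAt (fun y _ => hF y)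
      ((by fun_prop : Continuous fun y : ℝ => (15/512) * (-(16*y) + 4*y^3)).intervalIntegrable _ _)]
    norm_num
  have hR : (∫ y in (0:ℝ)..2, |psi' y|) = 15/32 := by
    have hcongr : Set.EqOn (fun y => |psi' y|)
        (fun y => (15/512) * (16*y - 4*y^3)) (Set.uIcc (0:ℝ) 2) := by
      intro y hy
      rw [Set.uIcc_of_le (by norm_num : (0:ℝ) ≤ 2)] at hy
      have h4 : (0:ℝ) ≤ 4 - y^2 := by nlinarith [hy.1, hy.2]
      have hval : psi' y = -((15/512) * (16*y - 4*y^3)) := by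
        simp only [psi', max_eq_left h4]; ring
      have hnp : psi' y ≤ 0 := by rw [hval]; nlinarith [hy.1, hy.2]
      simp only []; rw [abs_of_nonpos hnp, hval, neg_neg]
    rw [intervalIntegral.integral_congr hcongr]
    have hF : ∀ y : ℝ, HasDerivAt (fun y : ℝ => (15/512) * (8*y^2 - y^4))
        ((15/512) * (16*y - 4*y^3)) y := by
      intro y
      have := (((hasDerivAt_pow 2 y).const_mul (8:ℝ)).sub
        (hasDerivAt_pow 4 y)).const_mul (15/512 : ℝ)
      refine this.congr_deriv ?_
      push_cast; ring
    rw [intervalIntegral.integral_eq_sub_of_hasDerivAt (fun y _ => hF y)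
      ((by fun_prop : Continuous fun y : ℝ => (15/512) * (16*y - 4*y^3)).intervalIntegrable _ _)]
    norm_num
  rw [hL, hR]; norm_num

noncomputable def ker (s t : ℝ) : ℝ := s⁻¹ * psi (t / s)
noncomputable def kd (s t : ℝ) : ℝ := s⁻¹ * (psi' (t / s) * s⁻¹)

lemma ker_hasDeriv {s : ℝ} (hs : 0 < s) (t : ℝ) : HasDerivAt (ker s) (kd s t) t := by
  have h1 : HasDerivAt (fun t : ℝ => t / s) (s⁻¹) t := by
    simpa [div_eq_mul_inv] using (hasDerivAt_id t).mul_const s⁻¹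
  have := ((psi_hasDeriv (t / s)).comp t h1).const_mul s⁻¹
  exact this

lemma ker_deriv_eq {s : ℝ} (hs : 0 < s) : deriv (ker s) = kd s :=
  funext fun t => (ker_hasDeriv hs t).deriv

lemma ker_cont (s : ℝ) : Continuous (ker s) := by
  unfold ker; exact continuous_const.mul (psi_cont.comp (continuous_id.div_const s))

lemma kd_cont (s : ℝ) : Continuous (kd s) := by
  unfold kd
  exact continuous_const.mul ((psi'_cont.comp (continuous_id.div_const s)).mul continuous_const)

lemma ker_contDiff {s : ℝ} (hs : 0 < s) : ContDiff ℝ 1 (ker s) := by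
  rw [contDiff_one_iff_deriv]
  refine ⟨fun t => (ker_hasDeriv hs t).differentiableAt, ?_⟩
  rw [ker_deriv_eq hs]; exact kd_cont s

lemma ker_nonneg {s : ℝ} (hs : 0 < s) (t : ℝ) : 0 ≤ ker s t :=
  mul_nonneg (inv_nonneg.2 hs.le) (psi_nonneg _)

lemma ker_zero {s t : ℝ} (hs : 0 < s) (ht : 2 * s ≤ |t|) : ker s t = 0 := by
  have : 2 ≤ |t / s| := by
    rw [abs_div, abs_of_pos hs, le_div_iff₀ hs]; linarith
  simp [ker, psi_zero this]

lemma kd_zero {s t : ℝ} (hs : 0 < s) (ht : 2 * s ≤ |t|) : kd s t = 0 := by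
  have : 2 ≤ |t / s| := by
    rw [abs_div, abs_of_pos hs, le_div_iff₀ hs]; linarith
  simp [kd, psi'_zero this]

lemma ker_hasCompactSupport {s : ℝ} (hs : 0 < s) : HasCompactSupport (ker s) := by
  apply HasCompactSupport.intro (isCompact_Icc (a := -(2*s)) (b := 2*s))
  intro t ht
  apply ker_zero hs
  simp only [Set.mem_Icc, not_and_or, not_le] at ht
  rcases ht with ht | ht
  · rw [abs_of_neg (by linarith)]; linarith
  · rw [abs_of_pos (by linarith)]; linarith

lemma ker_integral {s : ℝ} (hs : 0 < s) : ∫ t : ℝ, ker s t = 1 := by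
  unfold ker
  rw [MeasureTheory.integral_const_mul, Measure.integral_comp_div psi s, psi_integral]
  simp [abs_of_pos hs, inv_mul_cancel₀ hs.ne']

lemma ker_abs_integral {s : ℝ} (hs : 0 < s) : ∫ t : ℝ, |t| * ker s t = 5/8 * s := by
  have hrw : (fun t : ℝ => |t| * ker s t) = fun t => (fun y => |y| * psi y) (t / s) := by
    funext t
    simp only [ker, abs_div, abs_of_pos hs]
    field_simp
  rw [hrw, Measure.integral_comp_div (fun y => |y| * psi y) s, abs_psi_integral,
    abs_of_pos hs]
  simp [mul_comm]

lemma kd_abs_integral {s : ℝ} (hs : 0 < s) : ∫ t : ℝ, |kd s t| = 15/16 * s⁻¹ := by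
  have hrw : (fun t : ℝ => |kd s t|) = fun t => (s⁻¹ * s⁻¹) * (fun y => |psi' y|) (t / s) := by
    funext t
    simp only [kd, abs_mul, abs_inv, abs_of_pos hs]
    ring
  rw [hrw, MeasureTheory.integral_const_mul, Measure.integral_comp_div (fun y => |psi' y|) s,
    abs_psi'_integral, abs_of_pos hs]
  field_simp
  ring

open scoped Convolution

lemma conv_eq (f g : ℝ → ℝ) :
    (f ⋆[ContinuousLinearMap.mul ℝ ℝ] g) = fun x => ∫ t : ℝ, f t * g (x - t) := by
  funext x
  rw [convolution_def]
  rfl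


lemma integrable_shift_mul {s : ℝ} (hs : 0 < s) {k : ℝ → ℝ} (hk : Continuous k)
    (hkz : ∀ t : ℝ, 2*s ≤ |t| → k t = 0) (g : ℝ → ℝ) (hg : Continuous g) (x : ℝ) :
    Integrable (fun t : ℝ => g t * k (x - t)) volume := by
  apply Continuous.integrable_of_hasCompactSupport
    (hg.mul (hk.comp (continuous_const.sub continuous_id)))
  apply HasCompactSupport.intro (isCompact_Icc (a := x - 3*s) (b := x + 3*s))
  intro t ht
  simp only [Set.mem_Icc, not_and_or, not_le] at ht
  have habs : 2 * s ≤ |x - t| := by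
    rcases ht with ht | ht
    · rw [abs_of_nonneg (by linarith)]; linarith
    · rw [abs_of_nonpos (by linarith)]; linarith
  show g t * k (x - t) = 0
  rw [hkz _ habs, mul_zero]

lemma key {s : ℝ} (hs : 0 < s) (h h' : ℝ → ℝ) (hder : ∀ x, HasDerivAt h (h' x) x)
    (hc' : Continuous h') (hb : ∀ x, |h' x| ≤ 1) :
    ∃ H H1 H2 : ℝ → ℝ,
      (∀ x, HasDerivAt H (H1 x) x) ∧ (∀ x, HasDerivAt H1 (H2 x) x) ∧ Continuous H2 ∧
      (∀ x, |H1 x| ≤ 1) ∧ (∀ x, |H2 x| ≤ s⁻¹) ∧ (∀ x, |h x - H x| ≤ s) ∧ Continuous H := by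
  have hch : Continuous h :=
    continuous_iff_continuousAt.2 fun x => (hder x).continuousAt
  set L : ℝ →L[ℝ] ℝ →L[ℝ] ℝ := ContinuousLinearMap.mul ℝ ℝ with hL
  have hloc_h : LocallyIntegrable h volume := hch.locallyIntegrable
  have hloc_h' : LocallyIntegrable h' volume := hc'.locallyIntegrable
  have suppK : HasCompactSupport (ker s) := ker_hasCompactSupport hs
  have cdK : ContDiff ℝ 1 (ker s) := ker_contDiff hs
  refine ⟨h ⋆[L] ker s, h' ⋆[L] ker s, h' ⋆[L] deriv (ker s), ?_, ?_, ?_, ?_, ?_, ?_, ?_⟩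
  · -- HasDerivAt H (H1 x)
    intro x
    have hd := suppK.hasDerivAt_convolution_right L hloc_h cdK x
    -- identity (h ⋆ deriv ker) x = (h' ⋆ ker) x via integration by parts
    have hparts : (h ⋆[L] deriv (ker s)) x = (h' ⋆[L] ker s) x := by
      rw [conv_eq, conv_eq, ker_deriv_eq hs]
      -- ∫ t, h t * kd s (x - t) = ∫ t, h' t * ker s (x - t)
      set Φ : ℝ → ℝ := fun t => h t * ker s (x - t) with hΦdef
      have hΦ : ∀ t, HasDerivAt Φ (h' t * ker s (x - t) - h t * kd s (x - t)) t := by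
        intro t
        have hinner : HasDerivAt (fun t : ℝ => ker s (x - t)) (-(kd s (x - t))) t := by
          have := (ker_hasDeriv hs (x - t)).comp t ((hasDerivAt_id t).const_sub x)
          exact this.congr_deriv (by ring)
        have := (hder t).mul hinner
        refine this.congr_deriv ?_; ring
      have hzero : (∫ t : ℝ, (h' t * ker s (x - t) - h t * kd s (x - t))) = 0 := by
        have hvanish : ∀ t : ℝ, t ∉ Set.Ioc (x - 3*s) (x + 3*s) →
            h' t * ker s (x - t) - h t * kd s (x - t) = 0 := by
          intro t ht
          simp only [Set.mem_Ioc, not_and_or, not_lt, not_le] at ht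
          have habs : 2 * s ≤ |x - t| := by
            rcases ht with ht | ht
            · rw [abs_of_nonneg (by linarith)]; linarith
            · rw [abs_of_nonpos (by linarith)]; linarith
          rw [ker_zero hs habs, kd_zero hs habs]; ring
        rw [← setIntegral_eq_integral_of_forall_compl_eq_zero hvanish,
          ← intervalIntegral.integral_of_le (by linarith : x - 3*s ≤ x + 3*s)]
        rw [intervalIntegral.integral_eq_sub_of_hasDerivAt (fun t _ => hΦ t)
          (((hc'.mul ((ker_cont s).comp (continuous_const.sub continuous_id))).sub
            (hch.mul ((kd_cont s).comp (continuous_const.sub continuous_id)))).intervalIntegrable _ _)]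
        have h1 : Φ (x + 3*s) = 0 := by
          have : ker s (x - (x + 3*s)) = 0 := by
            apply ker_zero hs; rw [show x - (x + 3*s) = -(3*s) by ring, abs_neg,
              abs_of_nonneg (by linarith)]; linarith
          show h (x + 3*s) * ker s (x - (x + 3*s)) = 0
          rw [this, mul_zero]
        have h2 : Φ (x - 3*s) = 0 := by
          have : ker s (x - (x - 3*s)) = 0 := by
            apply ker_zero hs; rw [show x - (x - 3*s) = 3*s by ring,
              abs_of_nonneg (by linarith)]; linarith
          show h (x - 3*s) * ker s (x - (x - 3*s)) = 0
          rw [this, mul_zero]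
        rw [h1, h2]; ring
      have hint1 : Integrable (fun t : ℝ => h' t * ker s (x - t)) volume :=
        integrable_shift_mul hs (ker_cont s) (fun t ht => ker_zero hs ht) h' hc' x
      have hint2 : Integrable (fun t : ℝ => h t * kd s (x - t)) volume :=
        integrable_shift_mul hs (kd_cont s) (fun t ht => kd_zero hs ht) h hch x
      have := MeasureTheory.integral_sub hint1 hint2
      rw [hzero] at this
      linarith [this]
    rw [← hparts]
    exact hd
  · -- HasDerivAt H1 (H2 x)
    intro x
    exact suppK.hasDerivAt_convolution_right L hloc_h' cdK x
  · -- Continuous H2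
    have : Continuous (deriv (ker s)) := by rw [ker_deriv_eq hs]; exact kd_cont s
    exact (suppK.deriv).continuous_convolution_right L hloc_h' this
  · -- |H1 x| ≤ 1
    intro x
    have e : (h' ⋆[L] ker s) x = ∫ t : ℝ, h' t * ker s (x - t) := by rw [conv_eq]
    rw [e]
    have hint : Integrable (fun t : ℝ => h' t * ker s (x - t)) volume :=
      integrable_shift_mul hs (ker_cont s) (fun t ht => ker_zero hs ht) h' hc' x
    have hintk : Integrable (fun t : ℝ => ker s (x - t)) volume := by
      have := integrable_shift_mul hs (ker_cont s) (fun t ht => ker_zero hs ht)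
        (fun _ => 1) continuous_const x
      simpa using this
    have h1 : |∫ t : ℝ, h' t * ker s (x - t)| ≤ ∫ t : ℝ, |h' t * ker s (x - t)| := by
      simpa only [Real.norm_eq_abs] using
        norm_integral_le_integral_norm (μ := volume) (fun t : ℝ => h' t * ker s (x - t))
    have h2 : (∫ t : ℝ, |h' t * ker s (x - t)|) ≤ ∫ t : ℝ, ker s (x - t) := by
      apply integral_mono hint.abs hintk
      intro t
      simp only []
      rw [abs_mul, abs_of_nonneg (ker_nonneg hs _)]
      calc |h' t| * ker s (x - t) ≤ 1 * ker s (x - t) :=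
            mul_le_mul_of_nonneg_right (hb t) (ker_nonneg hs _)
        _ = ker s (x - t) := one_mul _
    have h3 : (∫ t : ℝ, ker s (x - t)) = 1 := by
      rw [integral_sub_left_eq_self (ker s) volume x, ker_integral hs]
    linarith
  · -- |H2 x| ≤ s⁻¹
    intro x
    have e : (h' ⋆[L] deriv (ker s)) x = ∫ t : ℝ, h' t * kd s (x - t) := by
      rw [conv_eq, ker_deriv_eq hs]
    rw [e]
    have hint : Integrable (fun t : ℝ => h' t * kd s (x - t)) volume :=
      integrable_shift_mul hs (kd_cont s) (fun t ht => kd_zero hs ht) h' hc' x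
    have hintk : Integrable (fun t : ℝ => |kd s (x - t)|) volume := by
      have := (integrable_shift_mul hs (kd_cont s) (fun t ht => kd_zero hs ht)
        (fun _ => 1) continuous_const x).abs
      simpa using this
    have h1 : |∫ t : ℝ, h' t * kd s (x - t)| ≤ ∫ t : ℝ, |h' t * kd s (x - t)| := by
      simpa only [Real.norm_eq_abs] using
        norm_integral_le_integral_norm (μ := volume) (fun t : ℝ => h' t * kd s (x - t))
    have h2 : (∫ t : ℝ, |h' t * kd s (x - t)|) ≤ ∫ t : ℝ, |kd s (x - t)| := by
      apply integral_mono hint.abs hintk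
      intro t
      simp only []
      rw [abs_mul]
      calc |h' t| * |kd s (x - t)| ≤ 1 * |kd s (x - t)| :=
            mul_le_mul_of_nonneg_right (hb t) (abs_nonneg _)
        _ = |kd s (x - t)| := one_mul _
    have h3 : (∫ t : ℝ, |kd s (x - t)|) = 15/16 * s⁻¹ := by
      rw [integral_sub_left_eq_self (fun w => |kd s w|) volume x, kd_abs_integral hs]
    have h4 : 15/16 * s⁻¹ ≤ s⁻¹ := by
      have : (0:ℝ) ≤ s⁻¹ := inv_nonneg.2 hs.le
      linarith
    linarith
  · -- |h x - H x| ≤ s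
    intro x
    have hlip : ∀ a b : ℝ, |h a - h b| ≤ |a - b| := by
      have hl : LipschitzWith 1 h := by
        apply lipschitzWith_of_nnnorm_deriv_le (fun x => (hder x).differentiableAt)
        intro x
        rw [(hder x).deriv, ← NNReal.coe_le_coe, coe_nnnorm, NNReal.coe_one, Real.norm_eq_abs]
        exact hb x
      intro a b
      have := hl.dist_le_mul a b
      simpa [Real.dist_eq] using this
    have e : (h ⋆[L] ker s) x = ∫ t : ℝ, h t * ker s (x - t) := by rw [conv_eq]
    have hint1 : Integrable (fun t : ℝ => h x * ker s (x - t)) volume :=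
      integrable_shift_mul hs (ker_cont s) (fun t ht => ker_zero hs ht)
        (fun _ => h x) continuous_const x
    have hint2 : Integrable (fun t : ℝ => h t * ker s (x - t)) volume :=
      integrable_shift_mul hs (ker_cont s) (fun t ht => ker_zero hs ht) h hch x
    have hxrep : h x = ∫ t : ℝ, h x * ker s (x - t) := by
      rw [MeasureTheory.integral_const_mul, integral_sub_left_eq_self (ker s) volume x,
        ker_integral hs, mul_one]
    have hmaj : Integrable (fun t : ℝ => |x - t| * ker s (x - t)) volume := by
      have := integrable_shift_mul hs (k := fun t => |t| * ker s t)
        (continuous_abs.mul (ker_cont s))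
        (fun t ht => by show |t| * ker s t = 0; rw [ker_zero hs ht, mul_zero]) (fun _ => 1) continuous_const x
      simpa using this
    have e2 : h x - (h ⋆[L] ker s) x = ∫ t : ℝ, (h x * ker s (x - t) - h t * ker s (x - t)) := by
      rw [e]
      nth_rewrite 1 [hxrep]
      rw [← MeasureTheory.integral_sub hint1 hint2]
    rw [e2]
    have h1 : |∫ t : ℝ, (h x * ker s (x - t) - h t * ker s (x - t))|
        ≤ ∫ t : ℝ, |h x * ker s (x - t) - h t * ker s (x - t)| := by
      simpa only [Real.norm_eq_abs] using norm_integral_le_integral_norm (μ := volume)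
        (fun t : ℝ => h x * ker s (x - t) - h t * ker s (x - t))
    have h2 : (∫ t : ℝ, |h x * ker s (x - t) - h t * ker s (x - t)|)
        ≤ ∫ t : ℝ, |x - t| * ker s (x - t) := by
      apply integral_mono (hint1.sub hint2).abs hmaj
      intro t
      show |h x * ker s (x - t) - h t * ker s (x - t)| ≤ |x - t| * ker s (x - t)
      have hfac : h x * ker s (x - t) - h t * ker s (x - t) = (h x - h t) * ker s (x - t) := by
        ring
      rw [hfac, abs_mul, abs_of_nonneg (ker_nonneg hs _)]
      exact mul_le_mul_of_nonneg_right (hlip x t) (ker_nonneg hs _)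
    have h3 : (∫ t : ℝ, |x - t| * ker s (x - t)) = 5/8 * s := by
      rw [integral_sub_left_eq_self (fun w => |w| * ker s w) volume x, ker_abs_integral hs]
    have h4 : 5/8 * s ≤ s := by linarith
    linarith
  · -- Continuous H
    exact suppK.continuous_convolution_right L hloc_h (ker_cont s)

lemma int_close {Ω : Type*} [MeasurableSpace Ω] (P : Measure Ω) [IsProbabilityMeasure P]
    {F : Ω → ℝ} (hF : Measurable F) {g H : ℝ → ℝ} (hg : Continuous g) (hH : Continuous H)
    {s : ℝ} (hs : 0 ≤ s) (hclose : ∀ x, |g x - H x| ≤ s) :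
    |(∫ ω, g (F ω) ∂P) - ∫ ω, H (F ω) ∂P| ≤ s := by
  set d : Ω → ℝ := fun ω => g (F ω) - H (F ω) with hd
  have hd_meas : AEStronglyMeasurable d P :=
    ((hg.measurable.comp hF).sub (hH.measurable.comp hF)).aestronglyMeasurable
  have hd_int : Integrable d P := by
    refine Integrable.mono' (integrable_const s) hd_meas ?_
    filter_upwards with ω
    simpa [Real.norm_eq_abs, hd] using hclose (F ω)
  by_cases hint : Integrable (fun ω => g (F ω)) P
  · have hint2 : Integrable (fun ω => H (F ω)) P := by
      have : (fun ω => H (F ω)) = fun ω => g (F ω) - d ω := by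
        funext ω; simp [hd]
      rw [this]
      exact hint.sub hd_int
    rw [← MeasureTheory.integral_sub hint hint2]
    have := MeasureTheory.norm_integral_le_of_norm_le_const
      (μ := P) (f := d) (C := s) (by filter_upwards with ω; simpa [Real.norm_eq_abs, hd] using hclose (F ω))
    simpa [Real.norm_eq_abs, measure_univ] using this
  · have hint2 : ¬ Integrable (fun ω => H (F ω)) P := by
      intro hi
      apply hint
      have : (fun ω => g (F ω)) = fun ω => H (F ω) + d ω := by
        funext ω; simp [hd]
      rw [this]
      exact hi.add hd_int
    rw [integral_undef hint, integral_undef hint2]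
    simpa using hs

/-- Smoothing bound for the Wasserstein distance: if
`|E h(F) - E h(G)| ≤ A‖h'‖_∞ + B‖h''‖_∞` for every `h ∈ C²_b`, and `E|F|, E|G| ≤ M`,
then for every Lipschitz `h ∈ C¹` with `‖h'‖_∞ ≤ 1` and every `u ∈ (0,1/2)`,
`|E h(F) - E h(G)| ≤ A + (2+M)√u + B/√u`; optimizing over `u` gives a bound
`A + C√B` with `C = 2√(2+M)` depending only on `M`, valid when `0 < B < (2+M)/2`
(so that the optimal `u = B/(2+M)` lies in `(0,1/2)`). -/
theorem stmt17 {Ω : Type*} [MeasurableSpace Ω] (P : Measure Ω) [IsProbabilityMeasure P]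
    (F G : Ω → ℝ) (hF : Measurable F) (hG : Measurable G)
    (A B M : ℝ) (hA : 0 ≤ A) (hB : 0 ≤ B) (hM : 0 ≤ M)
    (hFmom : (∫ ω, |F ω| ∂P) ≤ M) (hGmom : (∫ ω, |G ω| ∂P) ≤ M)
    (hyp : ∀ (h h' h'' : ℝ → ℝ) (K₁ K₂ : ℝ),
      (∀ x, HasDerivAt h (h' x) x) → (∀ x, HasDerivAt h' (h'' x) x) →
      Continuous h'' → (∀ x, |h' x| ≤ K₁) → (∀ x, |h'' x| ≤ K₂) →
      |(∫ ω, h (F ω) ∂P) - ∫ ω, h (G ω) ∂P| ≤ A * K₁ + B * K₂) :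
    (∀ u ∈ Set.Ioo (0:ℝ) (1/2), ∀ (h h' : ℝ → ℝ),
      (∀ x, HasDerivAt h (h' x) x) → Continuous h' → (∀ x, |h' x| ≤ 1) →
      |(∫ ω, h (F ω) ∂P) - ∫ ω, h (G ω) ∂P|
        ≤ A + (2 + M) * Real.sqrt u + B / Real.sqrt u) ∧
    (∃ C > (0:ℝ), C = 2 * Real.sqrt (2 + M) ∧
      (0 < B → B < (2 + M) / 2 → ∀ (h h' : ℝ → ℝ),
        (∀ x, HasDerivAt h (h' x) x) → Continuous h' → (∀ x, |h' x| ≤ 1) →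
        |(∫ ω, h (F ω) ∂P) - ∫ ω, h (G ω) ∂P| ≤ A + C * Real.sqrt B)) := by
  have part1 : ∀ u ∈ Set.Ioo (0:ℝ) (1/2), ∀ (h h' : ℝ → ℝ),
      (∀ x, HasDerivAt h (h' x) x) → Continuous h' → (∀ x, |h' x| ≤ 1) →
      |(∫ ω, h (F ω) ∂P) - ∫ ω, h (G ω) ∂P|
        ≤ A + (2 + M) * Real.sqrt u + B / Real.sqrt u := by
    intro u hu h h' hder hc' hb
    set s := Real.sqrt u with hsdef
    have hs : 0 < s := Real.sqrt_pos.2 hu.1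
    obtain ⟨H, H1, H2, dH, dH1, cH2, bH1, bH2, bclose, cH⟩ := key hs h h' hder hc' hb
    have hch : Continuous h := continuous_iff_continuousAt.2 fun x => (hder x).continuousAt
    have main := hyp H H1 H2 1 s⁻¹ dH dH1 cH2 bH1 bH2
    have e1 : |(∫ ω, h (F ω) ∂P) - ∫ ω, H (F ω) ∂P| ≤ s :=
      int_close P hF hch cH hs.le bclose
    have e2 : |(∫ ω, h (G ω) ∂P) - ∫ ω, H (G ω) ∂P| ≤ s :=
      int_close P hG hch cH hs.le bclose
    have tri : |(∫ ω, h (F ω) ∂P) - ∫ ω, h (G ω) ∂P|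
        ≤ |(∫ ω, h (F ω) ∂P) - ∫ ω, H (F ω) ∂P|
          + |(∫ ω, H (F ω) ∂P) - ∫ ω, H (G ω) ∂P|
          + |(∫ ω, H (G ω) ∂P) - ∫ ω, h (G ω) ∂P| := by
      have t1 := abs_sub_le (∫ ω, h (F ω) ∂P) (∫ ω, H (F ω) ∂P) (∫ ω, h (G ω) ∂P)
      have t2 := abs_sub_le (∫ ω, H (F ω) ∂P) (∫ ω, H (G ω) ∂P) (∫ ω, h (G ω) ∂P)
      linarith
    have habs : |(∫ ω, H (G ω) ∂P) - ∫ ω, h (G ω) ∂P| ≤ s := by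
      rw [abs_sub_comm]; exact e2
    have hMs : 0 ≤ M * s := mul_nonneg hM hs.le
    have hdiv : B / s = B * s⁻¹ := div_eq_mul_inv B s
    calc |(∫ ω, h (F ω) ∂P) - ∫ ω, h (G ω) ∂P|
        ≤ s + (A * 1 + B * s⁻¹) + s := by linarith
      _ = A + 2 * s + B / s := by rw [hdiv]; ring
      _ ≤ A + (2 + M) * s + B / s := by linarith
  refine ⟨part1, 2 * Real.sqrt (2 + M), ?_, rfl, ?_⟩
  · positivity
  · intro hB0 hBlt h h' hder hc' hb
    set u := B / (2 + M) with hu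
    have h2M : (0:ℝ) < 2 + M := by linarith
    have hu1 : 0 < u := div_pos hB0 h2M
    have hu2 : u < 1/2 := by
      rw [hu, div_lt_iff₀ h2M]
      linarith
    have := part1 u ⟨hu1, hu2⟩ h h' hder hc' hb
    have hsqrtu : Real.sqrt u = Real.sqrt B / Real.sqrt (2 + M) := by
      rw [hu, Real.sqrt_div hB]
    have hsB : 0 < Real.sqrt B := Real.sqrt_pos.2 hB0
    have hsM : 0 < Real.sqrt (2 + M) := Real.sqrt_pos.2 h2M
    have heq : A + (2 + M) * Real.sqrt u + B / Real.sqrt u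
        = A + 2 * Real.sqrt (2 + M) * Real.sqrt B := by
      rw [hsqrtu]
      have e1 : 2 + M = Real.sqrt (2 + M) * Real.sqrt (2 + M) :=
        (Real.mul_self_sqrt h2M.le).symm
      have e2 : B = Real.sqrt B * Real.sqrt B := (Real.mul_self_sqrt hB).symm
      set sB := Real.sqrt B
      set sM := Real.sqrt (2 + M)
      field_simp
      nlinarith [e1, e2]
    rw [heq] at this
    exact this
end
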